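/- arXiv:1210.3894 — 11 statements merged into one kernel-verified Lean document; each statement's English description precedes it below -/
import Mathlib

section
/- Let f : ℝ → ℝ satisfy |f(ξ)| > |ξ| for some ξ ∈ ℝ. Then there exists a 2×2 real symmetric positive definite matrix A such that the matrix f*[A], obtained from A by applying f to the off-diagonal entries and leaving the diagonal unchanged, is not positive semidefinite. -/
/-!
Take `c` strictly between `|ξ|` and `|f ξ|` and `A = !![c, ξ; ξ, c]`. A symmetric `2 × 2` matrix
with positive corner is positive definite exactly when its determinant is positive, so `A` is
positive definite since `ξ² < c²`; but `f*[A] = !![c, f ξ; f ξ, c]` has determinant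
`c² - (f ξ)² < 0`, so it is not positive semidefinite.
-/

/-- `f*[A]`: apply `f` to off-diagonal entries, leave diagonal unchanged. -/
def offDiagApply {n : ℕ} (f : ℝ → ℝ) (A : Matrix (Fin n) (Fin n) ℝ) :
    Matrix (Fin n) (Fin n) ℝ :=
  Matrix.of fun i j => if i = j then A i i else f (A i j)

open Matrix

theorem offDiagApply_fin_two (f : ℝ → ℝ) (a b c d : ℝ) :
    offDiagApply f !![a, b; c, d] = !![a, f b; f c, d] := by
  ext i j
  fin_cases i <;> fin_cases j <;> simp [offDiagApply]

theorem Matrix.posDef_fin_two_of_sq_lt {a b d : ℝ} (ha : 0 < a) (h : b ^ 2 < a * d) :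
    (!![a, b; b, d]).PosDef := by
  refine .of_dotProduct_mulVec_pos (by ext i j; fin_cases i <;> fin_cases j <;> rfl) fun x hx => ?_
  simp only [mulVec_fin_two, dotProduct, Fin.sum_univ_two, star_trivial, of_apply, cons_val',
    cons_val_zero, cons_val_one, empty_val', cons_val_fin_one]
  have hq : a * (x 0 * (a * x 0 + b * x 1) + x 1 * (b * x 0 + d * x 1)) =
      (a * x 0 + b * x 1) ^ 2 + (a * d - b ^ 2) * x 1 ^ 2 := by ring
  refine pos_of_mul_pos_right (hq ▸ ?_) ha.le
  rcases eq_or_ne (x 1) 0 with h1 | h1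
  · have h0 : x 0 ≠ 0 := fun h0 => hx (by ext i; fin_cases i <;> simp [h0, h1])
    simp only [h1, mul_zero, add_zero]
    positivity
  · nlinarith [sq_pos_of_ne_zero h1, sq_nonneg (a * x 0 + b * x 1)]

theorem Matrix.PosSemidef.sq_le_mul_fin_two {a b d : ℝ} (h : (!![a, b; b, d]).PosSemidef) :
    b ^ 2 ≤ a * d := by
  have hdet := h.det_nonneg
  rw [det_fin_two_of] at hdet
  linarith

theorem stmt_0 (f : ℝ → ℝ) (ξ : ℝ) (hξ : |f ξ| > |ξ|) :
    ∃ A : Matrix (Fin 2) (Fin 2) ℝ, A.IsSymm ∧ A.PosDef ∧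
      ¬ (offDiagApply f A).PosSemidef := by
  obtain ⟨c, hξc, hcf⟩ := exists_between hξ
  have hc : 0 < c := (abs_nonneg ξ).trans_lt hξc
  obtain ⟨hξ_lower, hξ_upper⟩ := abs_lt.mp hξc
  have hA : (!![c, ξ; ξ, c]).PosDef :=
    posDef_fin_two_of_sq_lt hc (sq c ▸ sq_lt_sq' hξ_lower hξ_upper)
  refine ⟨_, isHermitian_iff_isSymm.mp hA.isHermitian, hA, fun hpsd => ?_⟩
  rw [offDiagApply_fin_two] at hpsd
  have hsq : f ξ ^ 2 ≤ c ^ 2 := sq c ▸ hpsd.sq_le_mul_fin_two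
  exact (abs_le_of_sq_le_sq hsq hc.le).not_gt hcf
end

section
/- Let f : ℝ → ℝ satisfy |f(x)| ≤ c|x| for all x ∈ ℝ, where 0 ≤ c < 1/(n-1) and n ≥ 2. Then for every n×n real symmetric positive definite matrix A, the matrix f*[A], obtained by applying f to every off-diagonal entry of A and leaving the diagonal unchanged, is positive definite. -/
/-!
Write `f*[A] = A ⊙ M`, where `M` has unit diagonal and off-diagonal entries `f(aᵢⱼ)/aᵢⱼ`, each of
absolute value at most `c`. As `c (n - 1) < 1`, the symmetric matrix `M` is strictly diagonally
dominant, so by Gershgorin's theorem its eigenvalues are positive and `M` is positive definite.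
The Schur product theorem then makes `A ⊙ M` positive definite.
-/

open Finset Matrix
open scoped ComplexOrder

namespace Matrix

variable {𝕜 ι : Type*} [RCLike 𝕜] [Fintype ι] [DecidableEq ι] {A : Matrix ι ι 𝕜}

theorem IsHermitian.eigenvalues_pos_of_sum_row_lt_diag (hA : A.IsHermitian)
    (h : ∀ k, ∑ j ∈ univ.erase k, ‖A k j‖ < RCLike.re (A k k)) (i : ι) :
    0 < hA.eigenvalues i := by
  have hμ : Module.End.HasEigenvalue (toLin' A) (hA.eigenvalues i : 𝕜) := by
    refine Module.End.hasEigenvalue_of_hasEigenvector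
      ((Module.End.hasEigenvector_iff (x := ⇑(hA.eigenvectorBasis i))).mpr ⟨?_, ?_⟩)
    · rw [Module.End.mem_eigenspace_iff, toLin'_apply, hA.mulVec_eigenvectorBasis i,
        RCLike.real_smul_eq_coe_smul (K := 𝕜)]
    · intro h0
      exact hA.eigenvectorBasis.orthonormal.ne_zero i (by ext j; exact congrFun h0 j)
  obtain ⟨k, hk⟩ := eigenvalue_mem_ball hμ
  rw [Metric.mem_closedBall, dist_comm, dist_eq_norm] at hk
  have hre := (RCLike.re_le_norm (A k k - hA.eigenvalues i)).trans hk
  simp only [map_sub, RCLike.ofReal_re] at hre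
  linarith [h k]

theorem IsHermitian.posDef_of_sum_row_lt_diag (hA : A.IsHermitian)
    (h : ∀ k, ∑ j ∈ univ.erase k, ‖A k j‖ < RCLike.re (A k k)) : A.PosDef :=
  hA.posDef_iff_eigenvalues_pos.mpr (hA.eigenvalues_pos_of_sum_row_lt_diag h)

end Matrix

section offDiagRatio

variable {ι : Type*} [DecidableEq ι] (f : ℝ → ℝ) (A : Matrix ι ι ℝ)

/-- At a zero entry `f (A i j) / A i j` is the junk value `0`, so `A ⊙ offDiagRatio f A` recovers
`f (A i j)` there only when `f 0 = 0`. -/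
noncomputable def offDiagRatio : Matrix ι ι ℝ :=
  of fun i j => if i = j then 1 else f (A i j) / A i j

variable {f A}

theorem offDiagRatio_isSymm (hA : A.IsSymm) : (offDiagRatio f A).IsSymm := by
  ext i j
  by_cases h : i = j
  · simp [offDiagRatio, h]
  · simp [offDiagRatio, h, Ne.symm h, hA.apply i j]

theorem abs_offDiagRatio_le {c : ℝ} (hc : 0 ≤ c) (hf : ∀ x, |f x| ≤ c * |x|) {i j : ι}
    (hij : i ≠ j) : |offDiagRatio f A i j| ≤ c := by
  rcases eq_or_ne (A i j) 0 with h0 | h0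
  · simpa [offDiagRatio, hij, h0]
  · rw [offDiagRatio, of_apply, if_neg hij, abs_div, div_le_iff₀ (abs_pos.mpr h0)]
    exact hf _

theorem sum_abs_offDiagRatio_le [Fintype ι] {c : ℝ} (hc : 0 ≤ c) (hf : ∀ x, |f x| ≤ c * |x|)
    (k : ι) : ∑ j ∈ univ.erase k, ‖offDiagRatio f A k j‖ ≤ (Fintype.card ι - 1) * c := by
  calc ∑ j ∈ univ.erase k, ‖offDiagRatio f A k j‖
      ≤ ∑ j ∈ univ.erase k, c :=
        sum_le_sum fun j hj => abs_offDiagRatio_le hc hf (ne_of_mem_erase hj).symm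
    _ = (Fintype.card ι - 1) * c := by
        rw [sum_const, card_erase_of_mem (mem_univ k), card_univ, nsmul_eq_mul,
          Nat.cast_pred (Fintype.card_pos_iff.mpr ⟨k⟩)]

theorem posDef_offDiagRatio [Fintype ι] {c : ℝ} (hA : A.IsSymm) (hc : 0 ≤ c)
    (hf : ∀ x, |f x| ≤ c * |x|) (hcard : (Fintype.card ι - 1) * c < 1) :
    (offDiagRatio f A).PosDef :=
  (isHermitian_iff_isSymm.mpr (offDiagRatio_isSymm hA)).posDef_of_sum_row_lt_diag fun k => by
    simpa [offDiagRatio] using (sum_abs_offDiagRatio_le hc hf k).trans_lt hcard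

end offDiagRatio

theorem offDiagApply_eq_hadamard {n : ℕ} {f : ℝ → ℝ} (hf : f 0 = 0)
    (A : Matrix (Fin n) (Fin n) ℝ) : offDiagApply f A = A ⊙ offDiagRatio f A := by
  ext i j
  rcases eq_or_ne i j with rfl | hij
  · simp [offDiagApply, offDiagRatio]
  · rcases eq_or_ne (A i j) 0 with h0 | h0
    · simp [offDiagApply, offDiagRatio, hij, h0, hf]
    · simp [offDiagApply, offDiagRatio, hij, mul_div_cancel₀ _ h0]

theorem stmt_1_general (n : ℕ) (hn : 2 ≤ n) (f : ℝ → ℝ) (c : ℝ)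
    (hc0 : 0 ≤ c) (hc1 : c < 1 / ((n : ℝ) - 1))
    (hf : ∀ x : ℝ, |f x| ≤ c * |x|)
    (A : Matrix (Fin n) (Fin n) ℝ) (hA : A.PosDef) :
    (offDiagApply f A).PosDef := by
  have hn1 : (0 : ℝ) < n - 1 := by
    have : (2 : ℝ) ≤ n := by exact_mod_cast hn
    linarith
  have hcard : (Fintype.card (Fin n) - 1) * c < 1 := by
    rwa [Fintype.card_fin, mul_comm, ← lt_div_iff₀ hn1]
  have hf0 : f 0 = 0 := abs_nonpos_iff.mp (by simpa using hf 0)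
  rw [offDiagApply_eq_hadamard hf0]
  exact hA.hadamard <|
    posDef_offDiagRatio (isHermitian_iff_isSymm.mp hA.isHermitian) hc0 hf hcard

theorem stmt_1 (n : ℕ) (hn : 2 ≤ n) (f : ℝ → ℝ) (c : ℝ)
    (hc0 : 0 ≤ c) (hc1 : c < 1 / ((n : ℝ) - 1))
    (hf : ∀ x : ℝ, |f x| ≤ c * |x|)
    (A : Matrix (Fin n) (Fin n) ℝ) (hAs : A.IsSymm) (hA : A.PosDef) :
    (offDiagApply f A).PosDef :=
  stmt_1_general n hn f c hc0 hc1 hf A hA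
end

section
/- Let G = (V,E) be a connected undirected simple graph with maximum vertex degree Δ. Suppose f : ℝ → ℝ satisfies |f(x)| ≤ c|x| for all x ∈ ℝ with 0 ≤ c < 1/Δ. Then for every positive definite matrix A with zeros according to G (i.e., a_{ij} = 0 whenever i ≠ j and (i,j) ∉ E), the matrix f*[A] obtained by applying f to off-diagonal entries is positive definite and also has zeros according to G. -/
/-!
Positive definiteness of `A` gives `a_ij² < a_ii a_jj` (a `2 × 2` principal minor), hence
`|f(a_ij)| ≤ c √(a_ii a_jj)`. With `D_i = a_ii x_i²`, AM-GM bounds each edge term of the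
quadratic form of `f*[A]` by `|f(a_ij) x_i x_j| ≤ c (D_i + D_j) / 2`, and summing over the
edges the form is at least `∑ D_i - c ∑ deg(i) D_i ≥ (1 - c Δ) ∑ D_i > 0`.
-/

open Finset Matrix

lemma Matrix.PosDef.sq_apply_lt_mul_diag {ι : Type*} [Fintype ι] [DecidableEq ι]
    {A : Matrix ι ι ℝ} (hA : A.PosDef) {i j : ι} (hij : i ≠ j) :
    A i j ^ 2 < A i i * A j j := by
  have hdet := (hA.submatrix (e := ![i, j])
    (by simp [Function.Injective, Fin.forall_fin_two, hij, hij.symm])).det_pos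
  have hsymm : A j i = A i j := by simpa using hA.isHermitian.apply i j
  rw [det_fin_two] at hdet
  simp [hsymm] at hdet
  linarith

lemma abs_mul_mul_le_of_sq_le {a b t c u v : ℝ} (ha : 0 ≤ a) (hb : 0 ≤ b) (hc : 0 ≤ c)
    (h : t ^ 2 ≤ c ^ 2 * (a * b)) : |u * t * v| ≤ c / 2 * (a * u ^ 2 + b * v ^ 2) := by
  have hrhs : 0 ≤ c / 2 * (a * u ^ 2 + b * v ^ 2) := by positivity
  rw [← abs_of_nonneg hrhs]
  apply sq_le_sq.mp
  calc (u * t * v) ^ 2 = t ^ 2 * (u ^ 2 * v ^ 2) := by ring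
    _ ≤ c ^ 2 * (a * b) * (u ^ 2 * v ^ 2) := by gcongr
    _ ≤ (c / 2 * (a * u ^ 2 + b * v ^ 2)) ^ 2 := by
      nlinarith [mul_nonneg (sq_nonneg c) (sq_nonneg (a * u ^ 2 - b * v ^ 2))]

namespace SimpleGraph

variable {V : Type*} [Fintype V] (G : SimpleGraph V) [DecidableRel G.Adj]

lemma sum_sum_neighborFinset_eq_sum_degree_mul (g : V → ℝ) :
    ∑ i, ∑ j ∈ G.neighborFinset i, g j = ∑ i, G.degree i * g i := by
  simp_rw [neighborFinset_eq_filter, sum_filter]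
  rw [sum_comm]
  refine sum_congr rfl fun i _ => ?_
  simp_rw [G.adj_comm _ i]
  rw [← sum_filter, sum_const, nsmul_eq_mul, ← neighborFinset_eq_filter,
    card_neighborFinset_eq_degree]

variable [DecidableEq V]

lemma dotProduct_mulVec_eq_sum_diag_add_sum_neighborFinset {R : Type*} [CommSemiring R]
    {B : Matrix V V R} (hB : ∀ i j, i ≠ j → ¬ G.Adj i j → B i j = 0) (x : V → R) :
    x ⬝ᵥ B *ᵥ x = ∑ i, (x i * B i i * x i + ∑ j ∈ G.neighborFinset i, x i * B i j * x j) := by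
  simp only [dotProduct, mulVec, mul_sum, ← mul_assoc]
  refine sum_congr rfl fun i _ => ?_
  rw [← sum_insert (f := fun j => x i * B i j * x j) (G.notMem_neighborFinset_self i)]
  refine (sum_subset (subset_univ _) fun j _ hj => ?_).symm
  have hij : i ≠ j := fun h => hj (h ▸ mem_insert_self i _)
  have hnadj : ¬ G.Adj i j :=
    fun h => hj (mem_insert_of_mem ((G.mem_neighborFinset i j).mpr h))
  simp [hB i j hij hnadj]

theorem posDef_of_sq_le_of_mul_maxDegree_lt_one {B : Matrix V V ℝ} {c : ℝ} (hBs : B.IsSymm)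
    (hdiag : ∀ i, 0 < B i i) (hB : ∀ i j, i ≠ j → ¬ G.Adj i j → B i j = 0)
    (hadj : ∀ i j, G.Adj i j → B i j ^ 2 ≤ c ^ 2 * (B i i * B j j))
    (hc0 : 0 ≤ c) (hc : c * G.maxDegree < 1) : B.PosDef := by
  refine .of_dotProduct_mulVec_pos (isHermitian_iff_isSymm.mpr hBs) fun x hx => ?_
  rw [star_trivial]
  set D : V → ℝ := fun i => B i i * x i ^ 2
  have hD : ∀ i, 0 ≤ D i := fun i => by positivity [(hdiag i).le]
  have hDsum : 0 < ∑ i, D i := by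
    obtain ⟨i, hi⟩ := Function.ne_iff.mp hx
    exact sum_pos' (fun i _ => hD i) ⟨i, mem_univ _, mul_pos (hdiag i) (sq_pos_of_ne_zero hi)⟩
  have hedge : ∀ i, ∀ j ∈ G.neighborFinset i, -(c / 2 * (D i + D j)) ≤ x i * B i j * x j :=
    fun i j hj => neg_le_of_abs_le <| abs_mul_mul_le_of_sq_le (hdiag i).le (hdiag j).le hc0
      (hadj i j ((G.mem_neighborFinset i j).mp hj))
  have hdeg : ∑ i, (G.degree i : ℝ) * D i ≤ G.maxDegree * ∑ i, D i := by
    rw [mul_sum]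
    exact sum_le_sum fun i _ =>
      mul_le_mul_of_nonneg_right (mod_cast G.degree_le_maxDegree i) (hD i)
  calc 0 < (1 - c * G.maxDegree) * ∑ i, D i := mul_pos (by linarith) hDsum
    _ ≤ ∑ i, D i - c * ∑ i, G.degree i * D i := by nlinarith
    _ = ∑ i, (D i + ∑ j ∈ G.neighborFinset i, -(c / 2 * (D i + D j))) := by
      simp only [sum_add_distrib, sum_neg_distrib, ← mul_sum, mul_add, sum_const,
        card_neighborFinset_eq_degree, nsmul_eq_mul, G.sum_sum_neighborFinset_eq_sum_degree_mul]
      ring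
    _ ≤ ∑ i, (x i * B i i * x i + ∑ j ∈ G.neighborFinset i, x i * B i j * x j) := by
      gcongr with i _ j hj
      · exact le_of_eq (by ring)
      · exact hedge i j hj
    _ = x ⬝ᵥ B *ᵥ x := (G.dotProduct_mulVec_eq_sum_diag_add_sum_neighborFinset hB x).symm

end SimpleGraph

theorem stmt_2_general (n : ℕ) (G : SimpleGraph (Fin n)) [DecidableRel G.Adj]
    (f : ℝ → ℝ) (c : ℝ)
    (hc0 : 0 ≤ c) (hc1 : c < 1 / (G.maxDegree : ℝ))
    (hf : ∀ x : ℝ, |f x| ≤ c * |x|)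
    (A : Matrix (Fin n) (Fin n) ℝ) (hA : A.PosDef)
    (hAG : ∀ i j, i ≠ j → ¬ G.Adj i j → A i j = 0) :
    (offDiagApply f A).PosDef ∧
      ∀ i j, i ≠ j → ¬ G.Adj i j → offDiagApply f A i j = 0 := by
  have hf0 : f 0 = 0 := abs_nonpos_iff.mp (by simpa using hf 0)
  have hsupp : ∀ i j, i ≠ j → ¬ G.Adj i j → offDiagApply f A i j = 0 := fun i j hij hnadj => by
    simp [offDiagApply, hij, hAG i j hij hnadj, hf0]
  have hsymm : (offDiagApply f A).IsSymm := by
    ext i j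
    by_cases h : i = j
    · simp [offDiagApply, h]
    · simpa [offDiagApply, h, Ne.symm h] using congrArg f (hA.isHermitian.apply i j)
  have hadj : ∀ i j, G.Adj i j → offDiagApply f A i j ^ 2 ≤
      c ^ 2 * (offDiagApply f A i i * offDiagApply f A j j) := fun i j h => by
    simp only [offDiagApply, of_apply, G.ne_of_adj h, if_false, if_true]
    calc f (A i j) ^ 2 = |f (A i j)| ^ 2 := (sq_abs _).symm
      _ ≤ (c * |A i j|) ^ 2 := pow_le_pow_left₀ (abs_nonneg _) (hf _) 2
      _ = c ^ 2 * A i j ^ 2 := by rw [mul_pow, sq_abs]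
      _ ≤ c ^ 2 * (A i i * A j j) :=
          mul_le_mul_of_nonneg_left (hA.sq_apply_lt_mul_diag (G.ne_of_adj h)).le (sq_nonneg c)
  have hc : c * G.maxDegree < 1 := by
    rcases (Nat.cast_nonneg (α := ℝ) G.maxDegree).eq_or_lt with h | h
    · simp [← h]
    · exact (lt_div_iff₀ h).mp hc1
  refine ⟨G.posDef_of_sq_le_of_mul_maxDegree_lt_one hsymm ?_ hsupp hadj hc0 hc, hsupp⟩
  simpa [offDiagApply] using fun i => hA.diag_pos (i := i)

theorem stmt_2 (n : ℕ) (G : SimpleGraph (Fin n)) [DecidableRel G.Adj]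
    (hG : G.Connected) (f : ℝ → ℝ) (c : ℝ)
    (hc0 : 0 ≤ c) (hc1 : c < 1 / (G.maxDegree : ℝ))
    (hf : ∀ x : ℝ, |f x| ≤ c * |x|)
    (A : Matrix (Fin n) (Fin n) ℝ) (hAs : A.IsSymm) (hA : A.PosDef)
    (hAG : ∀ i j, i ≠ j → ¬ G.Adj i j → A i j = 0) :
    (offDiagApply f A).PosDef ∧
      ∀ i j, i ≠ j → ¬ G.Adj i j → offDiagApply f A i j = 0 :=
  stmt_2_general n G f c hc0 hc1 hf A hA hAG
end

section
/- Let G be a tree (a finite connected simple graph with no cycles) and let f : ℝ → ℝ satisfy |f(x)| ≤ |x| for all x ∈ ℝ. Then for every symmetric positive definite matrix A with zeros according to G, the matrix f*[A] obtained by applying f to every off-diagonal entry of A (leaving the diagonal unchanged) is positive definite. -/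
open Matrix

theorem SimpleGraph.IsTree.exists_potential {V α : Type*} [Group α] {G : SimpleGraph V}
    (hG : G.IsTree) (σ : V → V → α) (hσ : ∀ v w, G.Adj v w → σ w v = (σ v w)⁻¹) :
    ∃ φ : V → α, ∀ v w, G.Adj v w → φ w = φ v * σ v w := by
  classical
  -- `φ v` is the product of `σ` along the unique path from a root `r` to `v`.
  obtain ⟨r⟩ := hG.connected.nonempty
  choose p hp _ using hG.existsUnique_path r
  let φ v := ((p v).darts.map fun d => σ d.fst d.snd).prod
  have φ_concat : ∀ {v w} (h : G.Adj v w), p w = (p v).concat h → φ w = φ v * σ v w := by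
    intro v w h hpw
    simp only [φ, hpw, Walk.darts_concat, List.concat_eq_append, List.map_append,
      List.prod_append, List.map_singleton, List.prod_singleton]
  refine ⟨φ, fun v w h => ?_⟩
  by_cases hv : v ∈ (p w).support
  · exact φ_concat h (hG.isAcyclic.path_concat (hp v) (hp w) h hv)
  · have hw : w ∈ (p v).support :=
      hG.isAcyclic.mem_support_of_ne_mem_support_of_adj_of_isPath (hp v) (hp w) h hv
    rw [φ_concat h.symm (hG.isAcyclic.path_concat (hp w) (hp v) h.symm hw), hσ v w h,
      inv_mul_cancel_right]

theorem SimpleGraph.IsTree.exists_signs_mul_mul_eq_neg_abs {V : Type*} {G : SimpleGraph V}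
    (hG : G.IsTree) {A : Matrix V V ℝ} (hA : A.IsSymm)
    (hAG : ∀ i j, i ≠ j → ¬ G.Adj i j → A i j = 0) :
    ∃ ε : V → ℤˣ, ∀ i j, i ≠ j → ε i * ε j * A i j = -|A i j| := by
  let σ i j : ℤˣ := if 0 < A i j then -1 else 1
  obtain ⟨ε, hε⟩ := hG.exists_potential σ fun i j _ => by
    rw [Int.units_inv_eq_self]; simp only [σ, hA.apply i j]
  refine ⟨ε, fun i j hij => ?_⟩
  by_cases hadj : G.Adj i j
  · have hεσ : ε i * ε j = σ i j := by rw [hε i j hadj, ← mul_assoc, Int.units_mul_self, one_mul]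
    have hcast : ((ε i : ℤ) : ℝ) * (ε j : ℤ) = ((σ i j : ℤ) : ℝ) := by
      rw [← hεσ, Units.val_mul, Int.cast_mul]
    rw [hcast]
    by_cases hpos : 0 < A i j
    · simp [σ, hpos, abs_of_pos hpos]
    · simp [σ, hpos, abs_of_nonpos (not_lt.mp hpos)]
  · simp [hAG i j hij hadj]

variable {n : ℕ}

theorem offDiagApply_isHermitian (f : ℝ → ℝ) {A : Matrix (Fin n) (Fin n) ℝ}
    (hA : A.IsHermitian) : (offDiagApply f A).IsHermitian := by
  rw [isHermitian_iff_isSymm] at hA ⊢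
  ext i j
  by_cases h : i = j
  · subst h; rfl
  · simp [offDiagApply, h, Ne.symm h, hA.apply i j]

theorem offDiagApply_neg_abs_eq_diagonal_mul_mul_diagonal {A : Matrix (Fin n) (Fin n) ℝ}
    {ε : Fin n → ℤˣ} (hε : ∀ i j, i ≠ j → ε i * ε j * A i j = -|A i j|) :
    offDiagApply (fun a => -|a|) A =
      diagonal (fun i => ((ε i : ℤ) : ℝ)) * A * diagonal (fun i => ((ε i : ℤ) : ℝ)) := by
  ext i j
  rw [mul_diagonal, diagonal_mul]
  by_cases h : i = j
  · subst h
    have hsq : ((ε i : ℤ) : ℝ) * (ε i : ℤ) = 1 := by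
      rw [← Int.cast_mul, ← Units.val_mul, Int.units_mul_self, Units.val_one, Int.cast_one]
    simp only [offDiagApply, of_apply, ↓reduceIte]
    linear_combination (-A i i) * hsq
  · simp only [offDiagApply, of_apply, if_neg h, ← hε i j h]
    ring

theorem dotProduct_offDiagApply_neg_abs_le {f : ℝ → ℝ} (hf : ∀ x, |f x| ≤ |x|)
    (A : Matrix (Fin n) (Fin n) ℝ) (x : Fin n → ℝ) :
    (fun i => |x i|) ⬝ᵥ (offDiagApply (fun a => -|a|) A *ᵥ fun i => |x i|) ≤
      x ⬝ᵥ (offDiagApply f A *ᵥ x) := by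
  simp only [dotProduct, mulVec, Finset.mul_sum]
  refine Finset.sum_le_sum fun i _ => Finset.sum_le_sum fun j _ => ?_
  by_cases h : i = j
  · subst h
    simp only [offDiagApply, of_apply, ↓reduceIte]
    exact le_of_eq (by linear_combination A i i * abs_mul_abs_self (x i))
  · simp only [offDiagApply, of_apply, if_neg h]
    calc |x i| * (-|A i j| * |x j|) ≤ -(|f (A i j)| * |x i * x j|) := by
          rw [abs_mul]
          nlinarith [hf (A i j), mul_nonneg (abs_nonneg (x i)) (abs_nonneg (x j))]
      _ ≤ x i * (f (A i j) * x j) := by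
          rw [← abs_mul, mul_left_comm]; exact neg_abs_le _

theorem posDef_offDiagApply_of_abs_le {f : ℝ → ℝ} (hf : ∀ x, |f x| ≤ |x|)
    {A : Matrix (Fin n) (Fin n) ℝ} (hA : A.IsHermitian)
    (hM : (offDiagApply (fun a => -|a|) A).PosDef) : (offDiagApply f A).PosDef := by
  refine .of_dotProduct_mulVec_pos (offDiagApply_isHermitian f hA) fun x hx => ?_
  have habs : (fun i => |x i|) ≠ 0 := fun h => hx <| funext fun i => abs_eq_zero.mp (congrFun h i)
  simpa using (hM.dotProduct_mulVec_pos habs).trans_le (dotProduct_offDiagApply_neg_abs_le hf A x)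

theorem Matrix.PosDef.offDiagApply_neg_abs {A : Matrix (Fin n) (Fin n) ℝ} (hA : A.PosDef)
    {ε : Fin n → ℤˣ} (hε : ∀ i j, i ≠ j → ε i * ε j * A i j = -|A i j|) :
    (offDiagApply (fun a => -|a|) A).PosDef := by
  have hD : IsUnit (diagonal fun i => ((ε i : ℤ) : ℝ)) :=
    isUnit_diagonal.mpr (Pi.isUnit_iff.mpr fun i => (ε i).isUnit.map (Int.castRingHom ℝ))
  rw [offDiagApply_neg_abs_eq_diagonal_mul_mul_diagonal hε]
  simpa [star_eq_conjTranspose] using (IsUnit.posDef_star_left_conjugate_iff hD).mpr hA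

theorem stmt_4_general (n : ℕ) (G : SimpleGraph (Fin n)) (hG : G.IsTree)
    (f : ℝ → ℝ) (hf : ∀ x : ℝ, |f x| ≤ |x|)
    (A : Matrix (Fin n) (Fin n) ℝ) (hA : A.PosDef)
    (hAG : ∀ i j, i ≠ j → ¬ G.Adj i j → A i j = 0) :
    (offDiagApply f A).PosDef := by
  obtain ⟨ε, hε⟩ := hG.exists_signs_mul_mul_eq_neg_abs (isHermitian_iff_isSymm.mp hA.1) hAG
  exact posDef_offDiagApply_of_abs_le hf hA.1 (hA.offDiagApply_neg_abs hε)

theorem stmt_4 (n : ℕ) (G : SimpleGraph (Fin n)) (hG : G.IsTree)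
    (f : ℝ → ℝ) (hf : ∀ x : ℝ, |f x| ≤ |x|)
    (A : Matrix (Fin n) (Fin n) ℝ) (hAs : A.IsSymm) (hA : A.PosDef)
    (hAG : ∀ i j, i ≠ j → ¬ G.Adj i j → A i j = 0) :
    (offDiagApply f A).PosDef :=
  stmt_4_general n G hG f hf A hA hAG
end

section
/- Let G be a tree and ε > 0. Then for every symmetric positive definite matrix A with zeros according to G, the soft-thresholded matrix η_ε(A), defined by (η_ε(A))_{ij} = sgn(a_{ij})·max(|a_{ij}| − ε, 0) for i ≠ j and (η_ε(A))_{ii} = a_{ii}, is positive definite. -/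
/-- Soft-thresholding at level `ε` applied to off-diagonal entries. -/
noncomputable def softThreshold {n : ℕ} (ε : ℝ) (A : Matrix (Fin n) (Fin n) ℝ) :
    Matrix (Fin n) (Fin n) ℝ :=
  Matrix.of fun i j =>
    if i = j then A i i else Real.sign (A i j) * max (|A i j| - ε) 0

/-! On a tree, signs `s i = ±1` with `s i * a i j * s j ≤ 0` for all `i ≠ j` exist: fix a root and
propagate the sign across each edge; no conflict arises because paths are unique. For `x ≠ 0` put
`y i = s i * |x i|`. Since `|η(a)| ≤ |a|`, every term of `xᵀ η(A) x` dominates the corresponding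
term `-|a i j| |x i| |x j|` of `yᵀ A y`, so `xᵀ η(A) x ≥ yᵀ A y > 0`. -/

namespace SimpleGraph

variable {V : Type*} {G : SimpleGraph V}

theorem IsTree.eq_concat_or_eq_concat (hG : G.IsTree) {r : V} (p : ∀ v, G.Walk r v)
    (hp : ∀ v, (p v).IsPath) {u v : V} (h : G.Adj u v) :
    p v = (p u).concat h ∨ p u = (p v).concat h.symm := by
  classical
  have hunique := hG.existsUnique_path
  by_cases hv : v ∈ (p u).support
  · right
    have htake : (p u).takeUntil v hv = p v :=
      (hunique r v).unique ((hp u).takeUntil hv) (hp v)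
    have hdrop : (p u).dropUntil v hv = Walk.cons h.symm .nil :=
      (hunique v u).unique ((hp u).dropUntil hv) (by simp [h.ne'])
    rw [Walk.concat_eq_append, ← htake, ← hdrop, Walk.take_spec]
  · exact Or.inl <| (hunique r v).unique (hp v) ((hp u).concat hv h)

theorem IsTree.exists_eq_mul_of_adj {α : Type*} [CommGroup α] (hG : G.IsTree)
    (c : V → V → α) (hc : ∀ u v, G.Adj u v → c v u = (c u v)⁻¹) :
    ∃ s : V → α, ∀ u v, G.Adj u v → s v = c u v * s u := by
  obtain ⟨r⟩ := hG.connected.nonempty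
  choose p hp _ using hG.existsUnique_path r
  let s v := ((p v).darts.map fun d => c d.fst d.snd).prod
  have step : ∀ {u v} (h : G.Adj u v), p v = (p u).concat h → s v = c u v * s u := by
    intro u v h e
    simp only [s, e, Walk.darts_concat, List.map_concat, List.prod_concat, mul_comm]
  refine ⟨s, fun u v h => ?_⟩
  rcases hG.eq_concat_or_eq_concat p hp h with e | e
  · exact step h e
  · rw [step h.symm e, hc u v h, mul_inv_cancel_left]

theorem IsTree.exists_abs_eq_one_mul_mul_nonpos (hG : G.IsTree) {A : Matrix V V ℝ}
    (hA : A.IsSymm) (hAG : ∀ i j, i ≠ j → ¬ G.Adj i j → A i j = 0) :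
    ∃ s : V → ℝ, (∀ i, |s i| = 1) ∧ ∀ i j, i ≠ j → s i * A i j * s j ≤ 0 := by
  let c : V → V → ℤˣ := fun u v => if A u v ≤ 0 then 1 else -1
  obtain ⟨t, ht⟩ := hG.exists_eq_mul_of_adj c fun u v _ => by
    rw [Int.units_inv_eq_self]; simp only [c, hA.apply u v]
  set s : V → ℝ := fun i => ((t i : ℤ) : ℝ)
  have hs : ∀ i, s i = 1 ∨ s i = -1 := fun i => by
    rcases Int.units_eq_one_or (t i) with h | h <;> simp [s, h]
  refine ⟨s, fun i => by rcases hs i with h | h <;> simp [h], fun i j hij => ?_⟩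
  by_cases hadj : G.Adj i j
  · have hsj : s j = ((c i j : ℤ) : ℝ) * s i := by simp [s, ht i j hadj]
    have hsi : s i * s i = 1 := by rcases hs i with h | h <;> simp [h]
    have hconj (x : ℝ) : s i * A i j * (x * s i) = x * A i j := by
      linear_combination (x * A i j) * hsi
    rw [hsj, hconj]
    by_cases hnonpos : A i j ≤ 0
    · simp [c, hnonpos]
    · simp only [c, if_neg hnonpos]; push_cast; linarith
  · simp [hAG i j hij hadj]

end SimpleGraph

theorem mul_abs_mul_mul_abs_le {a b s t x y : ℝ} (hs : |s| = 1) (ht : |t| = 1)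
    (hsat : s * a * t ≤ 0) (hba : |b| ≤ |a|) :
    s * |x| * (a * (t * |y|)) ≤ x * (b * y) := by
  have hsat' : s * a * t = -|a| := by
    have : |s * a * t| = |a| := by rw [abs_mul, abs_mul, hs, ht, one_mul, mul_one]
    rw [← this, abs_of_nonpos hsat, neg_neg]
  calc s * |x| * (a * (t * |y|)) = -(|a| * (|x| * |y|)) := by
        linear_combination |x| * |y| * hsat'
    _ ≤ -(|b| * (|x| * |y|)) := by gcongr
    _ = -|x * (b * y)| := by rw [abs_mul, abs_mul]; ring
    _ ≤ x * (b * y) := neg_abs_le _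

theorem mul_abs_mul_mul_abs_self {a s x : ℝ} (hs : |s| = 1) :
    s * |x| * (a * (s * |x|)) = x * (a * x) := by
  have hss : s * s = 1 := by rw [← abs_mul_abs_self, hs, one_mul]
  linear_combination (|x| * |x| * a) * hss + a * abs_mul_abs_self x

open Matrix in
theorem Matrix.PosDef.of_abs_le {ι : Type*} [Fintype ι] {A B : Matrix ι ι ℝ} (hA : A.PosDef)
    (hB : B.IsSymm) (hdiag : ∀ i, B i i = A i i) (hoff : ∀ i j, i ≠ j → |B i j| ≤ |A i j|)
    {s : ι → ℝ} (hs : ∀ i, |s i| = 1) (hsA : ∀ i j, i ≠ j → s i * A i j * s j ≤ 0) :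
    B.PosDef := by
  rw [posDef_iff_dotProduct_mulVec]
  refine ⟨isHermitian_iff_isSymm.mpr hB, fun x hx => ?_⟩
  set y : ι → ℝ := fun i => s i * |x i|
  have hy : y ≠ 0 := fun h => hx <| funext fun i => by
    have hsi : s i ≠ 0 := abs_pos.mp (by rw [hs i]; exact one_pos)
    simpa [y, hsi] using congrFun h i
  calc (0 : ℝ) < y ⬝ᵥ A *ᵥ y := by simpa using hA.dotProduct_mulVec_pos hy
    _ ≤ x ⬝ᵥ B *ᵥ x := by
      simp only [dotProduct, mulVec, Finset.mul_sum]
      refine Finset.sum_le_sum fun i _ => Finset.sum_le_sum fun j _ => ?_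
      rcases eq_or_ne i j with rfl | hij
      · rw [hdiag, mul_abs_mul_mul_abs_self (hs i)]
      · exact mul_abs_mul_mul_abs_le (hs i) (hs j) (hsA i j hij) (hoff i j hij)
    _ = star x ⬝ᵥ B *ᵥ x := by simp

theorem abs_sign_mul_max_sub_le {ε : ℝ} (hε : 0 ≤ ε) (x : ℝ) :
    |Real.sign x * max (|x| - ε) 0| ≤ |x| := by
  rw [abs_mul, abs_of_nonneg (le_max_right (|x| - ε) 0)]
  calc |Real.sign x| * max (|x| - ε) 0 ≤ 1 * |x| := by
        gcongr
        · rcases Real.sign_apply_eq x with h | h | h <;> simp [h]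
        · exact max_le (by linarith) (abs_nonneg x)
    _ = |x| := one_mul _

section softThreshold

variable {n : ℕ} {ε : ℝ} {A : Matrix (Fin n) (Fin n) ℝ}

theorem softThreshold_apply_self (i : Fin n) : softThreshold ε A i i = A i i := by
  simp [softThreshold]

theorem abs_softThreshold_apply_le (hε : 0 ≤ ε) {i j : Fin n} (hij : i ≠ j) :
    |softThreshold ε A i j| ≤ |A i j| := by
  simpa [softThreshold, hij] using abs_sign_mul_max_sub_le hε (A i j)

theorem softThreshold_isSymm (hA : A.IsSymm) : (softThreshold ε A).IsSymm := by
  refine Matrix.IsSymm.ext fun i j => ?_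
  rcases eq_or_ne i j with rfl | hij
  · rfl
  · simp [softThreshold, hij, hij.symm, hA.apply i j]

end softThreshold

theorem stmt_5_general (n : ℕ) (G : SimpleGraph (Fin n)) (hG : G.IsTree)
    (ε : ℝ) (hε : 0 < ε)
    (A : Matrix (Fin n) (Fin n) ℝ) (hA : A.PosDef)
    (hAG : ∀ i j, i ≠ j → ¬ G.Adj i j → A i j = 0) :
    (softThreshold ε A).PosDef := by
  have hAs : A.IsSymm := Matrix.isHermitian_iff_isSymm.mp hA.isHermitian
  obtain ⟨s, hs, hsA⟩ := hG.exists_abs_eq_one_mul_mul_nonpos hAs hAG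
  exact hA.of_abs_le (softThreshold_isSymm hAs) softThreshold_apply_self
    (fun _ _ => abs_softThreshold_apply_le hε.le) hs hsA

theorem stmt_5 (n : ℕ) (G : SimpleGraph (Fin n)) (hG : G.IsTree)
    (ε : ℝ) (hε : 0 < ε)
    (A : Matrix (Fin n) (Fin n) ℝ) (hAs : A.IsSymm) (hA : A.PosDef)
    (hAG : ∀ i j, i ≠ j → ¬ G.Adj i j → A i j = 0) :
    (softThreshold ε A).PosDef :=
  stmt_5_general n G hG ε hε A hA hAG
end

section
/- For every ε > 0, the matrix (ε/0.1)·A₃, where A₃ is the 3×3 matrix with rows (9.0817, 1.1024, 1.1024), (1.1024, 0.23359, 0.10237), (1.1024, 0.10237, 0.14398), is positive definite, but its soft-thresholded version at level ε (applying x ↦ sgn(x)(|x|−ε)₊ to off-diagonal entries only) is not positive definite. -/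
/-- The matrix `A₃` from the paper. -/
noncomputable def A₃ : Matrix (Fin 3) (Fin 3) ℝ :=
  Matrix.of ![![9.0817, 1.1024, 1.1024],
              ![1.1024, 0.23359, 0.10237],
              ![1.1024, 0.10237, 0.14398]]

/-!
Positive definiteness is preserved by positive scalings, and soft-thresholding commutes with them:
`η_{αε}(αA) = α η_ε(A)`. Hence it suffices to treat `ε = 0.1`. There `A₃` has positive leading
principal minors, so it is positive definite, whereas `η_{0.1}(A₃)` has negative determinant.
-/

open Matrix

theorem Real.sign_mul_of_pos {α : ℝ} (hα : 0 < α) (a : ℝ) : Real.sign (α * a) = Real.sign a := by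
  rcases lt_trichotomy a 0 with h | rfl | h
  · rw [Real.sign_of_neg h, Real.sign_of_neg (mul_neg_of_pos_of_neg hα h)]
  · rw [mul_zero]
  · rw [Real.sign_of_pos h, Real.sign_of_pos (mul_pos hα h)]

theorem softThreshold_smul {n : ℕ} {α : ℝ} (hα : 0 < α) (ε : ℝ) (A : Matrix (Fin n) (Fin n) ℝ) :
    softThreshold (α * ε) (α • A) = α • softThreshold ε A := by
  ext i j
  by_cases hij : i = j
  · simp [softThreshold, hij]
  · simp only [softThreshold, of_apply, Matrix.smul_apply, smul_eq_mul, if_neg hij,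
      Real.sign_mul_of_pos hα, abs_mul, abs_of_pos hα, ← mul_sub]
    rw [← mul_zero α, ← mul_max_of_nonneg _ _ hα.le, mul_zero]
    ring

theorem Matrix.posDef_fin_three_of_leadingMinors_pos {A : Matrix (Fin 3) (Fin 3) ℝ}
    (hA : A.IsHermitian) (h₁ : 0 < A 0 0) (h₂ : 0 < A 0 0 * A 1 1 - A 0 1 * A 1 0)
    (h₃ : 0 < A.det) : A.PosDef := by
  have hsymm (i j : Fin 3) : A j i = A i j := by simpa using hA.apply i j
  refine posDef_iff_dotProduct_mulVec.mpr ⟨hA, fun x hx => ?_⟩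
  set a := A 0 0
  set p := A 0 0 * A 1 1 - A 0 1 * A 1 0
  set q := A 0 0 * A 1 2 - A 0 1 * A 0 2
  -- completing the square twice
  have key : a * p * (star x ⬝ᵥ A *ᵥ x) =
      p * (a * x 0 + A 0 1 * x 1 + A 0 2 * x 2) ^ 2 + (p * x 1 + q * x 2) ^ 2
        + a * A.det * x 2 ^ 2 := by
    simp only [det_fin_three, dotProduct, mulVec, Fin.sum_univ_three, star_trivial, a, p, q,
      hsymm 0 1, hsymm 0 2, hsymm 1 2]
    ring
  have hS : 0 < p * (a * x 0 + A 0 1 * x 1 + A 0 2 * x 2) ^ 2 + (p * x 1 + q * x 2) ^ 2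
      + a * A.det * x 2 ^ 2 := by
    by_contra! hS
    have hL := mul_nonneg h₂.le (sq_nonneg (a * x 0 + A 0 1 * x 1 + A 0 2 * x 2))
    have hM := sq_nonneg (p * x 1 + q * x 2)
    have hN := mul_nonneg (mul_pos h₁ h₃).le (sq_nonneg (x 2))
    have hz : x 2 = 0 := by
      have : a * A.det * x 2 ^ 2 = 0 := by linarith
      simpa [h₁.ne', h₃.ne'] using this
    have hy : x 1 = 0 := by
      have : (p * x 1 + q * x 2) ^ 2 = 0 := by linarith
      simpa [hz, h₂.ne'] using this
    have h0 : x 0 = 0 := by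
      have : p * (a * x 0 + A 0 1 * x 1 + A 0 2 * x 2) ^ 2 = 0 := by linarith
      simpa [hz, hy, h₁.ne', h₂.ne'] using this
    exact hx (by ext i; fin_cases i <;> assumption)
  exact pos_of_mul_pos_right (key ▸ hS) (mul_pos h₁ h₂).le

theorem A₃_posDef : A₃.PosDef := by
  refine posDef_fin_three_of_leadingMinors_pos ?_ ?_ ?_ ?_
  · ext i j
    fin_cases i <;> fin_cases j <;> norm_num [A₃]
  · norm_num [A₃]
  · norm_num [A₃]
  · norm_num [A₃, det_fin_three, cons_val_two, cons_val_one, cons_val_zero]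

theorem softThreshold_A₃_det_neg : (softThreshold 0.1 A₃).det < 0 := by
  norm_num [det_fin_three, softThreshold, A₃, Real.sign_of_pos, abs_of_pos, Fin.ext_iff,
    cons_val_two, cons_val_one, cons_val_zero]

theorem stmt_6 (ε : ℝ) (hε : 0 < ε) :
    ((ε / 0.1) • A₃).PosDef ∧ ¬ (softThreshold ε ((ε / 0.1) • A₃)).PosDef := by
  have hα : 0 < ε / 0.1 := by positivity
  refine ⟨A₃_posDef.smul hα, fun hpos => ?_⟩
  have hscale : softThreshold ε ((ε / 0.1) • A₃) = (ε / 0.1) • softThreshold 0.1 A₃ := by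
    rw [← softThreshold_smul hα, div_mul_cancel₀ ε (by norm_num)]
  have hdet := hpos.det_pos
  rw [hscale, det_smul, Fintype.card_fin] at hdet
  exact hdet.not_gt (mul_neg_of_pos_of_neg (pow_pos hα 3) softThreshold_A₃_det_neg)
end

section
/- Let 0 < α ≤ ∞ and f : (−α, α) → ℝ with f(0) = 0 and f(γ) = 0 for some γ ∈ (0, α), and f not identically zero on (−α, α). Then there exists a positive semidefinite matrix A with entries in (−α, α) such that the matrix f[A] obtained by applying f to every entry of A is not positive semidefinite. -/
/-!
Suppose, for a contradiction, that `f[·]` preserves positive semidefiniteness on matrices with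
entries in `[-a, a]`, where `a` is real with `max |x| γ < a < α`. The `2 × 2` matrix
`!![p, b; b, q]` with `b² ≤ p q` is positive semidefinite, and if `f q = 0` the determinant of its
image is `-f(b)²`, so `f b = 0`. Taking `p = a`, every zero `q` of `f` produces the zeros
`±√(a q)`; iterating from `γ`, after `n` steps `f` vanishes at every `b` with
`(|b| / a) ^ 2 ^ n ≤ γ / a`, hence on all of `(-a, a)`, including at `x`.
-/

open Set

theorem Matrix.posSemidef_of_sq_le_mul {p q b : ℝ} (hp : 0 ≤ p) (hq : 0 ≤ q)
    (hb : b ^ 2 ≤ p * q) : (!![p, b; b, q]).PosSemidef := by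
  refine .of_dotProduct_mulVec_nonneg ?_ fun y => ?_
  · ext i j; fin_cases i <;> fin_cases j <;> rfl
  · simp only [dotProduct, mulVec, Fin.sum_univ_two, star_trivial, Pi.star_apply,
      Matrix.of_apply, Matrix.cons_val', Matrix.cons_val_zero, Matrix.cons_val_one,
      Matrix.empty_val', Matrix.cons_val_fin_one]
    rcases hp.eq_or_lt with rfl | hp
    · obtain rfl : b = 0 := by nlinarith [sq_nonneg b]
      nlinarith [mul_nonneg hq (sq_nonneg (y 1))]
    · -- completing the square: `p · yᵀ M y = (p y₀ + b y₁)² + (p q - b²) y₁²`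
      nlinarith [sq_nonneg (p * y 0 + b * y 1), mul_nonneg (sub_nonneg.2 hb) (sq_nonneg (y 1))]

def PreservesPosSemidefOn (f : ℝ → ℝ) (s : Set ℝ) : Prop :=
  ∀ n (A : Matrix (Fin n) (Fin n) ℝ), A.PosSemidef → (∀ i j, A i j ∈ s) → (A.map f).PosSemidef

namespace PreservesPosSemidefOn

variable {f : ℝ → ℝ} {a : ℝ}

theorem apply_eq_zero_of_sq_le_mul (hf : PreservesPosSemidefOn f (Icc (-a) a)) {p q b : ℝ}
    (hp : 0 ≤ p) (hpa : p ≤ a) (hq : 0 ≤ q) (hqa : q ≤ a) (hb : b ^ 2 ≤ p * q)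
    (hfq : f q = 0) : f b = 0 := by
  have hba : b ^ 2 ≤ a ^ 2 := by nlinarith [mul_le_mul hpa hqa hq (hp.trans hpa)]
  have hb' : b ∈ Icc (-a) a := abs_le.1 (abs_le_of_sq_le_sq hba (hp.trans hpa))
  have hna : -a ≤ 0 := neg_nonpos.2 (hp.trans hpa)
  have hbounds : ∀ i j, !![p, b; b, q] i j ∈ Icc (-a) a := by
    intro i j
    fin_cases i <;> fin_cases j
    exacts [⟨hna.trans hp, hpa⟩, hb', hb', ⟨hna.trans hq, hqa⟩]
  have hdet := (hf 2 _ (Matrix.posSemidef_of_sq_le_mul hp hq hb) hbounds).det_nonneg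
  rw [Matrix.det_fin_two] at hdet
  simp only [Matrix.map_apply, Matrix.of_apply, Matrix.cons_val', Matrix.cons_val_zero,
    Matrix.cons_val_one, Matrix.empty_val', Matrix.cons_val_fin_one, hfq, mul_zero, zero_sub,
    neg_nonneg] at hdet
  exact mul_self_eq_zero.1 (le_antisymm hdet (mul_self_nonneg _))


theorem apply_eq_zero_of_div_pow_le (hf : PreservesPosSemidefOn f (Icc (-a) a)) {γ : ℝ}
    (hγ : 0 < γ) (hγa : γ ≤ a) (hfγ : f γ = 0) (n : ℕ) {b : ℝ}
    (hb : (|b| / a) ^ 2 ^ n ≤ γ / a) : f b = 0 := by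
  have ha : 0 < a := hγ.trans_le hγa
  induction n generalizing b with
  | zero =>
    have hbγ : |b| ≤ γ := by simpa [div_le_div_iff_of_pos_right ha] using hb
    exact hf.apply_eq_zero_of_sq_le_mul hγ.le hγa hγ.le hγa
      (by nlinarith [sq_abs b, abs_nonneg b]) hfγ
  | succ n ih =>
    -- `b² = a q` with `q := b² / a`, and `q` satisfies the bound of step `n`
    have hba : |b| ≤ a := by
      have h1 : (|b| / a) ^ 2 ^ (n + 1) ≤ 1 := hb.trans ((div_le_one ha).2 hγa)
      rwa [pow_le_one_iff_of_nonneg (by positivity) (by positivity), div_le_one ha] at h1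
    have hq : (|b ^ 2 / a| / a) ^ 2 ^ n ≤ γ / a := by
      have hsq : |b ^ 2 / a| / a = (|b| / a) ^ 2 := by
        rw [abs_of_nonneg (by positivity), div_pow, ← sq_abs]; field_simp
      rwa [hsq, ← pow_mul, ← pow_succ']
    refine hf.apply_eq_zero_of_sq_le_mul ha.le le_rfl (by positivity) ?_ ?_ (ih hq)
    · rw [div_le_iff₀ ha]; nlinarith [sq_abs b, abs_nonneg b]
    · rw [mul_div_cancel₀ _ ha.ne']

theorem apply_eq_zero_of_abs_lt (hf : PreservesPosSemidefOn f (Icc (-a) a)) {γ : ℝ}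
    (hγ : 0 < γ) (hγa : γ ≤ a) (hfγ : f γ = 0) {x : ℝ} (hx : |x| < a) : f x = 0 := by
  have ha : 0 < a := hγ.trans_le hγa
  have hxa : |x| / a < 1 := (div_lt_one ha).2 hx
  obtain ⟨n, hn⟩ := exists_pow_lt_of_lt_one (div_pos hγ ha) hxa
  refine hf.apply_eq_zero_of_div_pow_le hγ hγa hfγ n ?_
  calc (|x| / a) ^ 2 ^ n ≤ (|x| / a) ^ n :=
        pow_le_pow_of_le_one (by positivity) hxa.le Nat.lt_two_pow_self.le
    _ ≤ γ / a := hn.le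

end PreservesPosSemidefOn

theorem stmt_8_general (α : EReal) (f : ℝ → ℝ)
    (γ : ℝ) (hγ0 : 0 < γ) (hγα : (γ : EReal) < α)
    (hfγ : f γ = 0)
    (hfne : ∃ x : ℝ, ((|x| : ℝ) : EReal) < α ∧ f x ≠ 0) :
    ∃ (n : ℕ) (A : Matrix (Fin n) (Fin n) ℝ), A.PosSemidef ∧
      (∀ i j, ((|A i j| : ℝ) : EReal) < α) ∧
      ¬ (Matrix.of fun i j => f (A i j)).PosSemidef := by
  obtain ⟨x, hxα, hfx⟩ := hfne
  obtain ⟨a, hxγa, haα⟩ := EReal.exists_between_coe_real (max_lt hxα hγα)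
  obtain ⟨hxa, hγa⟩ := max_lt_iff.1 hxγa
  by_contra! hpres
  have hf : PreservesPosSemidefOn f (Icc (-a) a) := fun n A hA hAa =>
    hpres n A hA fun i j => (EReal.coe_le_coe_iff.2 (abs_le.2 (hAa i j))).trans_lt haα
  exact hfx (hf.apply_eq_zero_of_abs_lt hγ0 (EReal.coe_lt_coe_iff.1 hγa).le hfγ
    (EReal.coe_lt_coe_iff.1 hxa))

theorem stmt_8 (α : EReal) (hα : 0 < α) (f : ℝ → ℝ)
    (hf0 : f 0 = 0) (γ : ℝ) (hγ0 : 0 < γ) (hγα : (γ : EReal) < α)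
    (hfγ : f γ = 0)
    (hfne : ∃ x : ℝ, ((|x| : ℝ) : EReal) < α ∧ f x ≠ 0) :
    ∃ (n : ℕ) (A : Matrix (Fin n) (Fin n) ℝ), A.PosSemidef ∧
      (∀ i j, ((|A i j| : ℝ) : EReal) < α) ∧
      ¬ (Matrix.of fun i j => f (A i j)).PosSemidef :=
  stmt_8_general α f γ hγ0 hγα hfγ hfne
end

section
/- Let f : (−α, α) → ℝ (0 < α ≤ ∞) be such that f*[A] is positive semidefinite for every positive semidefinite matrix A with entries in (−α, α) (f applied only off-diagonal). If A and B are positive semidefinite n×n matrices with entries in (−α, α) and A − B is positive semidefinite, then f*[A] − 2f[B] + f*[B] is positive semidefinite. -/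
/-- `f[A]`: apply `f` to every entry. -/
def entrywiseApply {n : ℕ} (f : ℝ → ℝ) (A : Matrix (Fin n) (Fin n) ℝ) :
    Matrix (Fin n) (Fin n) ℝ :=
  Matrix.of fun i j => f (A i j)

/-!
The block matrix `[[A, B], [B, B]]` is `(A - B) ⊕ 0` plus `[I; I] B [I, I]`, hence positive
semidefinite, and its entries are those of `A` and `B`. The hypothesis therefore makes
`[[f*[A], f[B]], [f[B], f*[B]]]` positive semidefinite, and compressing it by `[I, -I]` gives
`f*[A] - 2 f[B] + f*[B]`.
-/

namespace Matrix

variable {m R : Type*} [Fintype m] [DecidableEq m] [Ring R] [StarRing R]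

theorem fromBlocks_eq_add_of_sub (A B : Matrix m m R) :
    fromBlocks A B B B =
      fromRows (1 : Matrix m m R) 0 * (A - B) * (fromRows (1 : Matrix m m R) 0)ᴴ +
        fromRows (1 : Matrix m m R) 1 * B * (fromRows (1 : Matrix m m R) 1)ᴴ := by
  rw [fromRows_mul 1 0 (A - B), fromRows_mul 1 1 B,
    conjTranspose_fromRows_eq_fromCols_conjTranspose,
    conjTranspose_fromRows_eq_fromCols_conjTranspose, fromRows_mul_fromCols,
    fromRows_mul_fromCols, fromBlocks_add]
  simp

theorem fromCols_one_neg_one_mul_fromBlocks (P Q S : Matrix m m R) :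
    (fromCols 1 (-1) : Matrix m (m ⊕ m) R) * fromBlocks P Q Q S *
        (fromCols 1 (-1) : Matrix m (m ⊕ m) R)ᴴ = P - (2 : R) • Q + S := by
  rw [conjTranspose_fromCols_eq_fromRows_conjTranspose, fromCols_mul_fromBlocks,
    fromCols_mul_fromRows]
  simp only [conjTranspose_one, conjTranspose_neg, Matrix.one_mul, Matrix.mul_one, Matrix.neg_mul,
    Matrix.mul_neg, two_smul]
  abel

variable [PartialOrder R]

theorem PosSemidef.fromBlocks_of_sub [AddLeftMono R] {A B : Matrix m m R} (hB : B.PosSemidef)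
    (hAB : (A - B).PosSemidef) : (fromBlocks A B B B).PosSemidef := by
  rw [fromBlocks_eq_add_of_sub]
  exact (hAB.mul_mul_conjTranspose_same _).add (hB.mul_mul_conjTranspose_same _)

theorem PosSemidef.sub_two_smul_add_of_fromBlocks {P Q S : Matrix m m R}
    (h : (fromBlocks P Q Q S).PosSemidef) : (P - (2 : R) • Q + S).PosSemidef :=
  fromCols_one_neg_one_mul_fromBlocks P Q S ▸ h.mul_mul_conjTranspose_same _

end Matrix

open Matrix in
theorem offDiagApply_reindex_fromBlocks {n k : ℕ} (e : Fin n ⊕ Fin n ≃ Fin k) (f : ℝ → ℝ)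
    (A B C D : Matrix (Fin n) (Fin n) ℝ) :
    offDiagApply f (reindex e e (fromBlocks A B C D)) =
      reindex e e (fromBlocks (offDiagApply f A) (entrywiseApply f B) (entrywiseApply f C)
        (offDiagApply f D)) := by
  ext i j
  obtain ⟨x, rfl⟩ := e.surjective i
  obtain ⟨y, rfl⟩ := e.surjective j
  simp only [offDiagApply, entrywiseApply, reindex_apply, submatrix_apply, of_apply,
    e.symm_apply_apply, e.injective.eq_iff]
  rcases x with x | x <;> rcases y with y | y <;> simp

open Matrix in
theorem stmt_9_general (α : EReal) (f : ℝ → ℝ)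
    (hf : ∀ (m : ℕ) (M : Matrix (Fin m) (Fin m) ℝ), M.PosSemidef →
      (∀ i j, ((|M i j| : ℝ) : EReal) < α) → (offDiagApply f M).PosSemidef)
    (n : ℕ) (A B : Matrix (Fin n) (Fin n) ℝ)
    (hB : B.PosSemidef) (hAB : (A - B).PosSemidef)
    (hAα : ∀ i j, ((|A i j| : ℝ) : EReal) < α)
    (hBα : ∀ i j, ((|B i j| : ℝ) : EReal) < α) :
    (offDiagApply f A - (2 : ℝ) • entrywiseApply f B + offDiagApply f B).PosSemidef := by
  set M := reindex finSumFinEquiv finSumFinEquiv (fromBlocks A B B B)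
  have hM : M.PosSemidef := (hB.fromBlocks_of_sub hAB).submatrix _
  have hMα : ∀ i j, ((|M i j| : ℝ) : EReal) < α := by
    intro i j
    change ((|fromBlocks A B B B (finSumFinEquiv.symm i) (finSumFinEquiv.symm j)| : ℝ) : EReal) < α
    rcases finSumFinEquiv.symm i with x | x <;> rcases finSumFinEquiv.symm j with y | y
    exacts [hAα x y, hBα x y, hBα x y, hBα x y]
  have hfM := hf _ M hM hMα
  rw [offDiagApply_reindex_fromBlocks, reindex_apply, posSemidef_submatrix_equiv] at hfM
  exact hfM.sub_two_smul_add_of_fromBlocks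

theorem stmt_9 (α : EReal) (hα : 0 < α) (f : ℝ → ℝ)
    (hf : ∀ (m : ℕ) (M : Matrix (Fin m) (Fin m) ℝ), M.PosSemidef →
      (∀ i j, ((|M i j| : ℝ) : EReal) < α) → (offDiagApply f M).PosSemidef)
    (n : ℕ) (A B : Matrix (Fin n) (Fin n) ℝ)
    (hA : A.PosSemidef) (hB : B.PosSemidef) (hAB : (A - B).PosSemidef)
    (hAα : ∀ i j, ((|A i j| : ℝ) : EReal) < α)
    (hBα : ∀ i j, ((|B i j| : ℝ) : EReal) < α) :
    (offDiagApply f A - (2 : ℝ) • entrywiseApply f B + offDiagApply f B).PosSemidef :=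
  stmt_9_general α f hf n A B hB hAB hAα hBα
end

section
/- Let g : (0, ∞) → ℝ be absolutely monotonic (all derivatives exist and are nonnegative on (0,∞)) and bounded. Then g is constant. -/
theorem stmt_12 (g : ℝ → ℝ)
    (hsmooth : ContDiffOn ℝ (⊤ : ℕ∞) g (Set.Ioi (0 : ℝ)))
    (hmono : ∀ (k : ℕ), ∀ x ∈ Set.Ioi (0 : ℝ),
      0 ≤ iteratedDerivWithin k g (Set.Ioi (0 : ℝ)) x)
    (hbdd : ∃ M : ℝ, ∀ x ∈ Set.Ioi (0 : ℝ), |g x| ≤ M) :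
    ∀ x ∈ Set.Ioi (0 : ℝ), ∀ y ∈ Set.Ioi (0 : ℝ), g x = g y := by
  set s : Set ℝ := Set.Ioi (0 : ℝ) with hs_def
  have hs : IsOpen s := isOpen_Ioi
  have hsu : UniqueDiffOn ℝ s := hs.uniqueDiffOn
  have hconv : Convex ℝ s := convex_Ioi 0
  obtain ⟨M, hM⟩ := hbdd
  have htop : ContDiffOn ℝ (⊤ : ℕ∞) g s := hsmooth.of_le (by simp)
  have hgdiff : DifferentiableOn ℝ g s := htop.differentiableOn (by simp)
  -- first derivative nonneg
  have h1 : ∀ x ∈ s, 0 ≤ deriv g x := by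
    intro x hx
    have := hmono 1 x hx
    rwa [iteratedDerivWithin_one, derivWithin_of_isOpen hs hx] at this
  -- second derivative nonneg
  have h2 : ∀ x ∈ s, 0 ≤ deriv (deriv g) x := by
    intro x hx
    have := hmono 2 x hx
    rw [show (2 : ℕ) = 1 + 1 from rfl, iteratedDerivWithin_succ] at this
    have heq : Set.EqOn (iteratedDerivWithin 1 g s) (deriv g) s := by
      intro z hz
      rw [iteratedDerivWithin_one, derivWithin_of_isOpen hs hz]
    rw [derivWithin_congr heq (heq hx), derivWithin_of_isOpen hs hx] at this
    exact this
  have hg'diff : DifferentiableOn ℝ (deriv g) s :=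
    ((contDiffOn_infty_iff_deriv_of_isOpen hs).1 htop).2.differentiableOn
      (by simp)
  -- deriv g is monotone on s
  have hmonoderiv : MonotoneOn (deriv g) s := by
    refine monotoneOn_of_deriv_nonneg hconv hg'diff.continuousOn ?_ ?_
    · rw [hs.interior_eq]; exact hg'diff
    · rw [hs.interior_eq]; exact h2
  -- deriv g = 0 on s
  have hzero : ∀ x ∈ s, deriv g x = 0 := by
    intro x₀ hx₀
    by_contra hne
    have hc : 0 < deriv g x₀ := lt_of_le_of_ne (h1 x₀ hx₀) (Ne.symm hne)
    set c := deriv g x₀ with hc_def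
    -- h is monotone on Ici x₀
    have hIci : Set.Ici x₀ ⊆ s := fun z hz => show (0:ℝ) < z from lt_of_lt_of_le (show (0:ℝ) < x₀ from hx₀) hz
    have hIoi : Set.Ioi x₀ ⊆ s := fun z hz => show (0:ℝ) < z from lt_trans (show (0:ℝ) < x₀ from hx₀) hz
    have hmonoh : MonotoneOn (fun x => g x - c * x) (Set.Ici x₀) := by
      refine monotoneOn_of_deriv_nonneg (convex_Ici x₀)
        ((hgdiff.continuousOn.mono hIci).sub (by fun_prop)) ?_ ?_
      · rw [interior_Ici]
        exact (hgdiff.mono hIoi).sub ((differentiable_id.const_mul c).differentiableOn)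
      · rw [interior_Ici]
        intro z hz
        have hzd : DifferentiableAt ℝ g z :=
          (hgdiff z (hIoi hz)).differentiableAt (hs.mem_nhds (hIoi hz))
        rw [deriv_fun_sub hzd (by fun_prop), deriv_const_mul _ (by fun_prop)]
        simp only [deriv_id'', mul_one, sub_nonneg]
        exact hmonoderiv hx₀ (hIoi hz) (le_of_lt hz)
    -- pick large x
    set x := x₀ + (2 * M + 1) / c with hx_def
    have hM0 : 0 ≤ M := (abs_nonneg _).trans (hM x₀ hx₀)
    have ht : 0 ≤ (2 * M + 1) / c := by positivity
    have hxgt : x₀ ≤ x := by rw [hx_def]; linarith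
    have hxs : x ∈ s := hIci hxgt
    have key : g x₀ - c * x₀ ≤ g x - c * x := hmonoh (Set.self_mem_Ici) hxgt hxgt
    have hcx : c * x - c * x₀ = 2 * M + 1 := by
      rw [hx_def]; field_simp; ring
    have hb1 := abs_le.mp (hM x hxs)
    have hb2 := abs_le.mp (hM x₀ hx₀)
    linarith [key, hb1.2, hb2.1]
  -- conclude constant
  intro x hx y hy
  refine hconv.is_const_of_fderivWithin_eq_zero hgdiff (fun z hz => ?_) hx hy
  have : fderivWithin ℝ g s z = fderiv ℝ g z := fderivWithin_of_isOpen hs hz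
  rw [this]
  ext
  have : deriv g z = 0 := hzero z hz
  simp [← toSpanSingleton_deriv, this]
end

section
/- Let p(x) = Σ_{i=1}^d c_i x^i be a real polynomial with p(0) = 0, and write p₊(x) = Σ_{c_i>0} c_i x^i and p₋(x) = −Σ_{c_i<0} c_i x^i. Let A be an n×n symmetric positive semidefinite matrix. Then λ_min(p*[A]) ≥ p₊(λ_min(A)) − p₋(λ_max(A)) + min_i (a_{ii} − p(a_{ii})), where p*[A] applies p to off-diagonal entries and leaves the diagonal unchanged. -/
/-- The "positive part" `p₊(x) = ∑_{cᵢ > 0} cᵢ xⁱ` of a polynomial. -/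
noncomputable def polyPosPart (p : Polynomial ℝ) (x : ℝ) : ℝ :=
  ∑ i ∈ p.support, if 0 < p.coeff i then p.coeff i * x ^ i else 0

/-- The "negative part" `p₋(x) = −∑_{cᵢ < 0} cᵢ xⁱ` of a polynomial. -/
noncomputable def polyNegPart (p : Polynomial ℝ) (x : ℝ) : ℝ :=
  -∑ i ∈ p.support, if p.coeff i < 0 then p.coeff i * x ^ i else 0

/-!
Write `p*[A] = p[A] + D` with `p[A] = ∑ₖ cₖ A^{∘k}` the entrywise polynomial and
`D = diag(aᵢᵢ - p(aᵢᵢ))`. By the Schur product theorem, `B ⊙ D - A ⊙ C = (B - A) ⊙ D + A ⊙ (D - C)`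
is positive semidefinite whenever `0 ≤ A ≤ B` and `0 ≤ C ≤ D` in the Loewner order, so Hadamard
powers are monotone on the positive semidefinite cone. As `(c • 1)^{∘k} = cᵏ • 1` for `k ≥ 1`,
the eigenvalue bounds `m • 1 ≤ A ≤ M • 1` give `mᵏ • 1 ≤ A^{∘k} ≤ Mᵏ • 1`. Bounding each term
`cₖ A^{∘k}` from below by the end matching the sign of `cₖ`, and `D` by its smallest entry, gives
a scalar lower bound for `p*[A]`, hence for its eigenvalues.
-/

open Matrix
open scoped MatrixOrder ComplexOrder

namespace Matrix

section Hadamard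

variable {𝕜 ι : Type*} [RCLike 𝕜]

theorem hadamard_le_hadamard {A B C D : Matrix ι ι 𝕜} (hA : 0 ≤ A) (hAB : A ≤ B) (hC : 0 ≤ C)
    (hCD : C ≤ D) : A ⊙ C ≤ B ⊙ D := by
  have hD : 0 ≤ D := hC.trans hCD
  rw [le_iff, show B ⊙ D - A ⊙ C = (B - A) ⊙ D + A ⊙ (D - C) by
    ext i j; simp only [add_apply, sub_apply, hadamard_apply]; ring]
  exact (le_iff.mp hAB).hadamard hD.posSemidef |>.add (hA.posSemidef.hadamard (le_iff.mp hCD))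

theorem map_pow_succ (A : Matrix ι ι 𝕜) (k : ℕ) : A.map (· ^ (k + 1)) = A.map (· ^ k) ⊙ A := by
  ext i j; simp [pow_succ]

theorem PosSemidef.map_pow [Finite ι] {A : Matrix ι ι 𝕜} (hA : A.PosSemidef) (k : ℕ) :
    (A.map (· ^ k)).PosSemidef := by
  induction k with
  | zero =>
    convert posSemidef_vecMulVec_self_star (1 : ι → 𝕜) using 1
    ext i j; simp [vecMulVec_apply]
  | succ k ih => rw [map_pow_succ]; exact ih.hadamard hA

theorem map_pow_mono [Finite ι] {A B : Matrix ι ι 𝕜} (hA : 0 ≤ A) (hAB : A ≤ B) (k : ℕ) :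
    A.map (· ^ k) ≤ B.map (· ^ k) := by
  induction k with
  | zero => exact le_of_eq (by ext; simp)
  | succ k ih =>
    rw [map_pow_succ, map_pow_succ]
    exact hadamard_le_hadamard (hA.posSemidef.map_pow k).nonneg ih hA hAB

theorem smul_one_map_pow [DecidableEq ι] (c : ℝ) {k : ℕ} (hk : k ≠ 0) :
    (c • (1 : Matrix ι ι 𝕜)).map (· ^ k) = c ^ k • 1 := by
  ext i j
  obtain rfl | hij := eq_or_ne i j <;> simp [*, smul_pow]

end Hadamard

section Loewner

variable {𝕜 ι : Type*} [RCLike 𝕜] [Fintype ι] [DecidableEq ι]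

theorem IsHermitian.smul_one_le_iff {A : Matrix ι ι 𝕜} (hA : A.IsHermitian) {c : ℝ} :
    c • (1 : Matrix ι ι 𝕜) ≤ A ↔ ∀ i, c ≤ hA.eigenvalues i := by
  rw [← Algebra.algebraMap_eq_smul_one, algebraMap_le_iff_le_spectrum hA.isSelfAdjoint,
    hA.spectrum_real_eq_range_eigenvalues, Set.forall_mem_range]

theorem IsHermitian.le_smul_one_iff {A : Matrix ι ι 𝕜} (hA : A.IsHermitian) {c : ℝ} :
    A ≤ c • (1 : Matrix ι ι 𝕜) ↔ ∀ i, hA.eigenvalues i ≤ c := by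
  rw [← Algebra.algebraMap_eq_smul_one, le_algebraMap_iff_spectrum_le hA.isSelfAdjoint,
    hA.spectrum_real_eq_range_eigenvalues, Set.forall_mem_range]

theorem smul_one_le_map_pow {A : Matrix ι ι 𝕜} {m : ℝ} (hm₀ : 0 ≤ m) (hm : m • 1 ≤ A)
    {k : ℕ} (hk : k ≠ 0) : m ^ k • (1 : Matrix ι ι 𝕜) ≤ A.map (· ^ k) :=
  smul_one_map_pow (𝕜 := 𝕜) (ι := ι) m hk ▸
    map_pow_mono (PosSemidef.one.smul hm₀).nonneg hm k

theorem map_pow_le_smul_one {A : Matrix ι ι 𝕜} (hA : 0 ≤ A) {M : ℝ} (hM : A ≤ M • 1)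
    {k : ℕ} (hk : k ≠ 0) : A.map (· ^ k) ≤ M ^ k • (1 : Matrix ι ι 𝕜) :=
  smul_one_map_pow (𝕜 := 𝕜) (ι := ι) M hk ▸ map_pow_mono hA hM k

theorem ite_smul_one_le_smul {B : Matrix ι ι 𝕜} {m M : ℝ} (hm : m • 1 ≤ B) (hM : B ≤ M • 1)
    (a : ℝ) : (if 0 < a then a * m else a * M) • (1 : Matrix ι ι 𝕜) ≤ a • B := by
  split_ifs with ha
  · rw [mul_smul]; exact smul_le_smul_of_nonneg_left hm ha.le
  · rw [mul_smul]; exact smul_le_smul_of_nonpos_left hM (not_lt.mp ha)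

end Loewner

end Matrix

theorem polyPosPart_sub_polyNegPart (p : Polynomial ℝ) (x y : ℝ) :
    polyPosPart p x - polyNegPart p y =
      ∑ k ∈ p.support, if 0 < p.coeff k then p.coeff k * x ^ k else p.coeff k * y ^ k := by
  rw [polyPosPart, polyNegPart, sub_neg_eq_add, ← Finset.sum_add_distrib]
  refine Finset.sum_congr rfl fun k _ => ?_
  rcases lt_trichotomy (p.coeff k) 0 with h | h | h
  · simp [h, h.not_gt]
  · simp [h]
  · simp [h, h.not_gt]

theorem Matrix.map_eval_eq_sum {R ι : Type*} [CommSemiring R] (p : Polynomial R)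
    (A : Matrix ι ι R) : A.map p.eval = ∑ k ∈ p.support, p.coeff k • A.map (· ^ k) := by
  ext i j
  simp [Polynomial.eval_eq_sum, Polynomial.sum_def, Matrix.sum_apply]

theorem Matrix.smul_one_le_map_eval {ι : Type*} [Fintype ι] [DecidableEq ι] {p : Polynomial ℝ}
    (hp0 : p.coeff 0 = 0) {A : Matrix ι ι ℝ} {m M : ℝ} (hm₀ : 0 ≤ m) (hm : m • 1 ≤ A)
    (hM : A ≤ M • 1) : (polyPosPart p m - polyNegPart p M) • 1 ≤ A.map p.eval := by
  have hA : 0 ≤ A := (PosSemidef.one.smul hm₀).nonneg.trans hm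
  rw [polyPosPart_sub_polyNegPart, Finset.sum_smul, map_eval_eq_sum]
  refine Finset.sum_le_sum fun k hk => ?_
  have hk0 : k ≠ 0 := by rintro rfl; exact Polynomial.mem_support_iff.mp hk hp0
  exact ite_smul_one_le_smul (smul_one_le_map_pow hm₀ hm hk0) (map_pow_le_smul_one hA hM hk0) _

theorem offDiagApply_eq_map_add_diagonal {n : ℕ} (f : ℝ → ℝ) (A : Matrix (Fin n) (Fin n) ℝ) :
    offDiagApply f A = A.map f + diagonal fun j => A j j - f (A j j) := by
  ext i j
  obtain rfl | hij := eq_or_ne i j <;> simp [offDiagApply, *]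

theorem stmt_15_general (n : ℕ) (p : Polynomial ℝ) (hp0 : p.coeff 0 = 0)
    (A : Matrix (Fin n) (Fin n) ℝ) (hA : A.PosSemidef)
    (hS : (offDiagApply p.eval A).IsHermitian) :
    ∀ i, polyPosPart p (⨅ j, hA.isHermitian.eigenvalues j) -
        polyNegPart p (⨆ j, hA.isHermitian.eigenvalues j) +
        (⨅ j, A j j - p.eval (A j j)) ≤ hS.eigenvalues i := by
  set ev := hA.isHermitian.eigenvalues
  have hm₀ : 0 ≤ ⨅ j, ev j := Real.iInf_nonneg hA.eigenvalues_nonneg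
  have hm : (⨅ j, ev j) • 1 ≤ A := hA.isHermitian.smul_one_le_iff.mpr
    fun j => ciInf_le (Finite.bddBelow_range _) j
  have hM : A ≤ (⨆ j, ev j) • 1 := hA.isHermitian.le_smul_one_iff.mpr
    fun j => le_ciSup (Finite.bddAbove_range _) j
  have hD : (⨅ j, A j j - p.eval (A j j)) • 1 ≤ diagonal fun j => A j j - p.eval (A j j) := by
    rw [smul_one_eq_diagonal, le_iff, diagonal_sub, posSemidef_diagonal_iff]
    exact fun j => sub_nonneg.mpr (ciInf_le (Finite.bddBelow_range _) j)
  refine hS.smul_one_le_iff.mp ?_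
  rw [add_smul, offDiagApply_eq_map_add_diagonal]
  exact add_le_add (smul_one_le_map_eval hp0 hm₀ hm hM) hD

theorem stmt_15 (n : ℕ) [NeZero n] (p : Polynomial ℝ) (hp0 : p.coeff 0 = 0)
    (A : Matrix (Fin n) (Fin n) ℝ) (hA : A.PosSemidef)
    (hS : (offDiagApply p.eval A).IsHermitian) :
    ∀ i, polyPosPart p (⨅ j, hA.isHermitian.eigenvalues j) -
        polyNegPart p (⨆ j, hA.isHermitian.eigenvalues j) +
        (⨅ j, A j j - p.eval (A j j)) ≤ hS.eigenvalues i :=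
  stmt_15_general n p hp0 A hA hS
end

section
/- Let p be a real polynomial with p(0) = 0, |p(x)| ≤ |x| on [−1,1], and let A be an n×n correlation matrix (symmetric positive semidefinite with unit diagonal) whose condition number λ_max(A)/λ_min(A) is at most p₊(1)/p₋(1) (with p₋(1) > 0). Then p*[A], the matrix with p applied to off-diagonal entries and unit diagonal, is positive semidefinite. -/
/-!
Let `l ≤ m` be the extreme eigenvalues of `A`, so `l • 1 ≤ A ≤ m • 1` in the Loewner order.
Because `A` has unit diagonal, `A ⊙ (B - l • 1) = A ⊙ B - l • 1`, so the Schur product theorem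
propagates the sandwich to every Hadamard power `A^{∘k} = A.map (· ^ k)`, `k ≥ 1`.
Writing `p = ∑ cₖ Xᵏ` (no constant term),
`p*[A] = ∑ cₖ A^{∘k} + (1 - p(1)) • 1 ≥ (p₊(1) l - p₋(1) m) • 1 + (1 - p(1)) • 1`,
and both coefficients are nonnegative: the first by the condition-number hypothesis, the second
because `|p(1)| ≤ 1`.
-/

open Polynomial
open scoped MatrixOrder ComplexOrder

theorem posPart_smul_sub_negPart_smul_le {R M : Type*} [Ring R] [LinearOrder R] [IsOrderedRing R]
    [AddCommGroup M] [PartialOrder M] [IsOrderedAddMonoid M] [Module R M] [PosSMulMono R M]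
    {L x U : M} (hL : L ≤ x) (hU : x ≤ U) (c : R) : c⁺ • L - c⁻ • U ≤ c • x :=
  calc c⁺ • L - c⁻ • U ≤ c⁺ • x - c⁻ • x :=
        sub_le_sub (smul_le_smul_of_nonneg_left hL (posPart_nonneg c))
          (smul_le_smul_of_nonneg_left hU (negPart_nonneg c))
    _ = c • x := by rw [← sub_smul, posPart_sub_negPart]

theorem Finset.sum_posPart_smul_sub_sum_negPart_smul_le {κ R M : Type*} [Ring R] [LinearOrder R]
    [IsOrderedRing R] [AddCommGroup M] [PartialOrder M] [IsOrderedAddMonoid M] [Module R M]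
    [PosSMulMono R M] (s : Finset κ) (c : κ → R) {P : κ → M} {L U : M}
    (hL : ∀ k ∈ s, L ≤ P k) (hU : ∀ k ∈ s, P k ≤ U) :
    (∑ k ∈ s, (c k)⁺) • L - (∑ k ∈ s, (c k)⁻) • U ≤ ∑ k ∈ s, c k • P k := by
  rw [Finset.sum_smul, Finset.sum_smul, ← Finset.sum_sub_distrib]
  exact Finset.sum_le_sum fun k hk => posPart_smul_sub_negPart_smul_le (hL k hk) (hU k hk) (c k)

namespace Matrix

variable {𝕜 ι : Type*} [RCLike 𝕜]

theorem hadamard_sub {A B C : Matrix ι ι 𝕜} : A ⊙ (B - C) = A ⊙ B - A ⊙ C := by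
  rw [eq_sub_iff_add_eq, ← hadamard_add, sub_add_cancel]

theorem map_pow_succ_eq_hadamard (A : Matrix ι ι 𝕜) (k : ℕ) :
    A.map (· ^ (k + 1)) = A ⊙ A.map (· ^ k) := by
  ext i j
  simp [pow_succ']

variable [DecidableEq ι]

theorem IsHermitian.iInf_eigenvalues_smul_one_le [Fintype ι] {A : Matrix ι ι 𝕜} (hA : A.IsHermitian) :
    (⨅ i, hA.eigenvalues i) • (1 : Matrix ι ι 𝕜) ≤ A := by
  rw [← Algebra.algebraMap_eq_smul_one, algebraMap_le_iff_le_spectrum hA.isSelfAdjoint,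
    hA.spectrum_real_eq_range_eigenvalues]
  rintro _ ⟨i, rfl⟩
  exact ciInf_le (Set.finite_range _).bddBelow i

theorem IsHermitian.le_iSup_eigenvalues_smul_one [Fintype ι] {A : Matrix ι ι 𝕜} (hA : A.IsHermitian) :
    A ≤ (⨆ i, hA.eigenvalues i) • (1 : Matrix ι ι 𝕜) := by
  rw [← Algebra.algebraMap_eq_smul_one, le_algebraMap_iff_spectrum_le hA.isSelfAdjoint,
    hA.spectrum_real_eq_range_eigenvalues]
  rintro _ ⟨i, rfl⟩
  exact le_ciSup (Set.finite_range _).bddAbove i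

theorem hadamard_smul_one_of_diag_eq_one {A : Matrix ι ι 𝕜} (hdiag : A.diag = 1) (c : ℝ) :
    A ⊙ (c • 1 : Matrix ι ι 𝕜) = c • 1 := by
  rw [hadamard_smul, hadamard_one_eq_one_iff.mpr hdiag]

variable {A B : Matrix ι ι 𝕜} {c : ℝ}

theorem PosSemidef.smul_one_le_hadamard (hA : A.PosSemidef) (hdiag : A.diag = 1)
    (hB : c • 1 ≤ B) : c • 1 ≤ A ⊙ B := by
  have := hA.hadamard (le_iff.mp hB)
  rwa [hadamard_sub, hadamard_smul_one_of_diag_eq_one hdiag, ← le_iff] at this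

theorem PosSemidef.hadamard_le_smul_one (hA : A.PosSemidef) (hdiag : A.diag = 1)
    (hB : B ≤ c • 1) : A ⊙ B ≤ c • 1 := by
  have := hA.hadamard (le_iff.mp hB)
  rwa [hadamard_sub, hadamard_smul_one_of_diag_eq_one hdiag, ← le_iff] at this

theorem PosSemidef.smul_one_le_map_pow (hA : A.PosSemidef) (hdiag : A.diag = 1)
    (hc : c • 1 ≤ A) {k : ℕ} (hk : k ≠ 0) : c • 1 ≤ A.map (· ^ k) := by
  obtain ⟨k, rfl⟩ := Nat.exists_eq_add_one_of_ne_zero hk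
  induction k with
  | zero => simpa using hc
  | succ k ih =>
    rw [map_pow_succ_eq_hadamard]
    exact hA.smul_one_le_hadamard hdiag (ih k.succ_ne_zero)

theorem PosSemidef.map_pow_le_smul_one (hA : A.PosSemidef) (hdiag : A.diag = 1)
    (hc : A ≤ c • 1) {k : ℕ} (hk : k ≠ 0) : A.map (· ^ k) ≤ c • 1 := by
  obtain ⟨k, rfl⟩ := Nat.exists_eq_add_one_of_ne_zero hk
  induction k with
  | zero => simpa using hc
  | succ k ih =>
    rw [map_pow_succ_eq_hadamard]
    exact hA.hadamard_le_smul_one hdiag (ih k.succ_ne_zero)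

end Matrix

theorem polyPosPart_one (p : ℝ[X]) : polyPosPart p 1 = ∑ k ∈ p.support, (p.coeff k)⁺ := by
  refine Finset.sum_congr rfl fun k _ => ?_
  rw [one_pow, mul_one]
  split_ifs with h
  · exact (posPart_eq_self.mpr h.le).symm
  · exact (posPart_eq_zero.mpr (not_lt.mp h)).symm

theorem polyNegPart_one (p : ℝ[X]) : polyNegPart p 1 = ∑ k ∈ p.support, (p.coeff k)⁻ := by
  rw [polyNegPart, ← Finset.sum_neg_distrib]
  refine Finset.sum_congr rfl fun k _ => ?_
  rw [one_pow, mul_one]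
  split_ifs with h
  · exact (negPart_eq_neg.mpr h.le).symm
  · rw [neg_zero, negPart_eq_zero.mpr (not_lt.mp h)]

theorem offDiagApply_eval_eq {n : ℕ} (p : ℝ[X]) {A : Matrix (Fin n) (Fin n) ℝ}
    (hdiag : A.diag = 1) :
    offDiagApply p.eval A = ∑ k ∈ p.support, p.coeff k • A.map (· ^ k) + (1 - p.eval 1) • 1 := by
  ext i j
  have hA : A i i = 1 := congrFun hdiag i
  by_cases h : i = j
  · subst h
    simp [offDiagApply, Matrix.sum_apply, hA, eval_eq_sum, Polynomial.sum]
  · simp [offDiagApply, Matrix.sum_apply, h, eval_eq_sum, Polynomial.sum]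

theorem stmt_17_general (n : ℕ) (p : Polynomial ℝ) (hp0 : p.coeff 0 = 0)
    (hp : ∀ x ∈ Set.Icc (-1 : ℝ) 1, |p.eval x| ≤ |x|)
    (A : Matrix (Fin n) (Fin n) ℝ) (hA : A.PosSemidef)
    (hdiag : ∀ i, A i i = 1)
    (hcond : polyNegPart p 1 * (⨆ j, hA.isHermitian.eigenvalues j) ≤
      polyPosPart p 1 * (⨅ j, hA.isHermitian.eigenvalues j)) :
    (offDiagApply p.eval A).PosSemidef := by
  set l := ⨅ j, hA.isHermitian.eigenvalues j
  set m := ⨆ j, hA.isHermitian.eigenvalues j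
  have hunit : A.diag = 1 := funext hdiag
  have hsupp : ∀ k ∈ p.support, k ≠ 0 := fun k hk h => mem_support_iff.mp hk (h ▸ hp0)
  have hp1 : p.eval 1 ≤ 1 := (abs_le.mp (by simpa using hp 1 ⟨by norm_num, le_rfl⟩)).2
  have hsum : 0 ≤ ∑ k ∈ p.support, p.coeff k • A.map (· ^ k) :=
    calc (0 : Matrix (Fin n) (Fin n) ℝ)
        ≤ (polyPosPart p 1 * l - polyNegPart p 1 * m) • 1 :=
          smul_nonneg (sub_nonneg.mpr hcond) Matrix.PosSemidef.one.nonneg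
      _ = polyPosPart p 1 • l • 1 - polyNegPart p 1 • m • 1 := by rw [sub_smul, mul_smul, mul_smul]
      _ ≤ _ := by
          rw [polyPosPart_one, polyNegPart_one]
          exact Finset.sum_posPart_smul_sub_sum_negPart_smul_le _ _
            (fun k hk => hA.smul_one_le_map_pow hunit
              hA.isHermitian.iInf_eigenvalues_smul_one_le (hsupp k hk))
            (fun k hk => hA.map_pow_le_smul_one hunit
              hA.isHermitian.le_iSup_eigenvalues_smul_one (hsupp k hk))
  rw [offDiagApply_eval_eq p hunit]
  exact Matrix.nonneg_iff_posSemidef.mp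
    (add_nonneg hsum (smul_nonneg (sub_nonneg.mpr hp1) Matrix.PosSemidef.one.nonneg))

theorem stmt_17 (n : ℕ) [NeZero n] (p : Polynomial ℝ) (hp0 : p.coeff 0 = 0)
    (hp : ∀ x ∈ Set.Icc (-1 : ℝ) 1, |p.eval x| ≤ |x|)
    (A : Matrix (Fin n) (Fin n) ℝ) (hA : A.PosSemidef)
    (hdiag : ∀ i, A i i = 1)
    (hneg : 0 < polyNegPart p 1)
    (hcond : polyNegPart p 1 * (⨆ j, hA.isHermitian.eigenvalues j) ≤
      polyPosPart p 1 * (⨅ j, hA.isHermitian.eigenvalues j)) :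
    (offDiagApply p.eval A).PosSemidef :=
  stmt_17_general n p hp0 hp A hA hdiag hcond
end
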